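/- With D, S, E as above, the assignment δ ↦ [id \ δ / id] defines an injective group homomorphism μ_{C,A} : E(C, A) → Ẽ(C, A) for each pair of objects, and these maps are natural in C and A, giving a natural transformation μ : E ⇒ Ẽ ∘ (Qᵒᵖ × Q) where Q : D → D[S⁻¹] is the localization functor. -/

import Mathlib

open CategoryTheory

universe v u

/-- An additive bifunctor `E : Dᵒᵖ × D ⥤ Ab`, given by its action on objects
(valued in abelian groups), pushforward along morphisms in the covariant
(second) variable and pullback along morphisms in the contravariant (first)
variable. -/
structure AddBifunctor (C : Type u) [Category.{v} C] [Preadditive C] where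
  E : C → C → AddCommGrpCat.{v}
  push : ∀ {Z X X' : C}, (X ⟶ X') → E Z X → E Z X'
  pull : ∀ {Z' Z X : C}, (Z' ⟶ Z) → E Z X → E Z' X
  push_id : ∀ {Z X : C} (δ : E Z X), push (𝟙 X) δ = δ
  push_comp : ∀ {Z X X' X'' : C} (f : X ⟶ X') (g : X' ⟶ X'') (δ : E Z X),
      push (f ≫ g) δ = push g (push f δ)
  pull_id : ∀ {Z X : C} (δ : E Z X), pull (𝟙 Z) δ = δ
  pull_comp : ∀ {Z'' Z' Z X : C} (g : Z'' ⟶ Z') (f : Z' ⟶ Z) (δ : E Z X),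
      pull (g ≫ f) δ = pull g (pull f δ)
  pull_push : ∀ {Z' Z X X' : C} (c : Z' ⟶ Z) (a : X ⟶ X') (δ : E Z X),
      pull c (push a δ) = push a (pull c δ)
  push_add : ∀ {Z X X' : C} (a : X ⟶ X') (δ δ' : E Z X),
      push a (δ + δ') = push a δ + push a δ'
  pull_add : ∀ {Z' Z X : C} (c : Z' ⟶ Z) (δ δ' : E Z X),
      pull c (δ + δ') = pull c δ + pull c δ'
  push_add_hom : ∀ {Z X X' : C} (a a' : X ⟶ X') (δ : E Z X),
      push (a + a') δ = push a δ + push a' δ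
  pull_add_hom : ∀ {Z' Z X : C} (c c' : Z' ⟶ Z) (δ : E Z X),
      pull (c + c') δ = pull c δ + pull c' δ

/-- 2-out-of-3 property for a class of morphisms. -/
def TwoOutOfThree {D : Type u} [Category.{v} D] (S : MorphismProperty D) : Prop :=
  (∀ {X Y Z : D} (f : X ⟶ Y) (g : Y ⟶ Z), S f → S g → S (f ≫ g)) ∧
  (∀ {X Y Z : D} (f : X ⟶ Y) (g : Y ⟶ Z), S f → S (f ≫ g) → S g) ∧
  (∀ {X Y Z : D} (f : X ⟶ Y) (g : Y ⟶ Z), S g → S (f ≫ g) → S f)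

variable {D : Type u} [Category.{v} D] [Preadditive D]

/-- A triplet `(C ⇐t Z ⇢δ X ⇐s A)` representing an element of `Ẽ(C, A)`:
morphisms `t : Z ⟶ C` and `s : A ⟶ X` in `S` together with an extension
`δ ∈ E(Z, X)`. -/
structure Triplet (S : MorphismProperty D) (T : AddBifunctor D) (Cc A : D) where
  Z : D
  X : D
  t : Z ⟶ Cc
  s : A ⟶ X
  ht : S t
  hs : S s
  δ : T.E Z X

/-- Two triplets are equivalent if for some common denominator the pulled–pushed
extensions agree. -/
def TripletRel (S : MorphismProperty D) (T : AddBifunctor D) (Cc A : D)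
    (T₁ T₂ : Triplet S T Cc A) : Prop :=
  ∃ (Z X : D) (t : Z ⟶ Cc) (s : A ⟶ X) (u₁ : T₁.X ⟶ X) (v₁ : Z ⟶ T₁.Z)
    (u₂ : T₂.X ⟶ X) (v₂ : Z ⟶ T₂.Z),
    S t ∧ S s ∧ S u₁ ∧ S v₁ ∧ S u₂ ∧ S v₂ ∧
    s = T₁.s ≫ u₁ ∧ s = T₂.s ≫ u₂ ∧ t = v₁ ≫ T₁.t ∧ t = v₂ ≫ T₂.t ∧
    T.pull v₁ (T.push u₁ T₁.δ) = T.pull v₂ (T.push u₂ T₂.δ)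

/-- The canonical map `μ_{C,A} : E(C, A) → Ẽ(C, A)`, `δ ↦ [id \ δ / id]`. -/
def muMap (S : MorphismProperty D) [S.HasLeftCalculusOfFractions]
    (T : AddBifunctor D) (Cc A : D) (δ : T.E Cc A) : Quot (TripletRel S T Cc A) :=
  Quot.mk _ ⟨Cc, A, 𝟙 Cc, 𝟙 A, S.id_mem Cc, S.id_mem A, δ⟩

/-!
Call a triplet `(v ≫ t) \ v^* u_* δ / (s ≫ u)` with `u, v ∈ S` an expansion of `t \ δ / s`. Two
triplets are related exactly when they have a common expansion, and the Ore conditions together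
with 2-out-of-3 give any two expansions of one triplet a common expansion; so the relation is an
equivalence, and a map on triplets descends to `Ẽ` as soon as it is invariant under expansion.
Push and pull along a morphism complete an Ore square; by the cancellation halves of the calculus
of fractions the class of the result does not depend on the square.
If `t \ δ / s` and `t \ δ' / s` are equivalent, cancellation lets both expansions be taken along
the same `u, v`, so `v^* u_* (δ - δ') = 0` and `δ = δ'` by the hypothesis on `E`. Hence
`δ ↦ [t \ δ / s]` is injective for every fixed denominator (`μ` is the case `t = s = id`), which
is also what makes addition over a common denominator well defined.
-/

open MorphismProperty

namespace AddBifunctor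

variable (T : AddBifunctor D)

theorem push_sub {Z X X' : D} (a : X ⟶ X') (δ δ' : T.E Z X) :
    T.push a (δ - δ') = T.push a δ - T.push a δ' :=
  (AddMonoidHom.mk' (T.push a) (T.push_add a)).map_sub δ δ'

theorem pull_sub {Z' Z X : D} (c : Z' ⟶ Z) (δ δ' : T.E Z X) :
    T.pull c (δ - δ') = T.pull c δ - T.pull c δ' :=
  (AddMonoidHom.mk' (T.pull c) (T.pull_add c)).map_sub δ δ'

theorem pull_push_comp {Z'' Z' Z X X' X'' : D} (v' : Z'' ⟶ Z') (v : Z' ⟶ Z) (u : X ⟶ X')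
    (u' : X' ⟶ X'') (δ : T.E Z X) :
    T.pull (v' ≫ v) (T.push (u ≫ u') δ) = T.pull v' (T.push u' (T.pull v (T.push u δ))) := by
  rw [T.pull_comp, T.push_comp, T.pull_push v u']

def TorsionFree (S : MorphismProperty D) : Prop :=
  ∀ {Z' Z X X' : D} (u : X ⟶ X') (v : Z' ⟶ Z) (δ : T.E Z X),
    S u → S v → T.pull v (T.push u δ) = 0 → δ = 0

variable {T} {S : MorphismProperty D}

theorem TorsionFree.eq_of_pull_push_eq (hT : T.TorsionFree S) {Z' Z X X' : D} {u : X ⟶ X'}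
    {v : Z' ⟶ Z} (hu : S u) (hv : S v) {δ δ' : T.E Z X}
    (h : T.pull v (T.push u δ) = T.pull v (T.push u δ')) : δ = δ' :=
  sub_eq_zero.mp (hT u v _ hu hv (by rw [push_sub, pull_sub, h, sub_self]))

end AddBifunctor

namespace TwoOutOfThree

variable {C : Type*} [Category C] {W : MorphismProperty C}

theorem exists_comp_eq_comp_of_span [W.HasLeftCalculusOfFractions] (h : TwoOutOfThree W)
    {X Y₁ Y₂ : C} {s₁ : X ⟶ Y₁} {s₂ : X ⟶ Y₂} (hs₁ : W s₁) (hs₂ : W s₂) :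
    ∃ (Y : C) (p₁ : Y₁ ⟶ Y) (p₂ : Y₂ ⟶ Y), W p₁ ∧ W p₂ ∧ s₁ ≫ p₁ = s₂ ≫ p₂ := by
  obtain ⟨ψ, hψ⟩ := (RightFraction.mk s₁ hs₁ s₂).exists_leftFraction
  exact ⟨ψ.Y', ψ.f, ψ.s, h.2.1 s₁ ψ.f hs₁ (hψ ▸ W.comp_mem _ _ hs₂ ψ.hs), ψ.hs, hψ.symm⟩

theorem exists_comp_eq_comp_of_cospan [W.HasRightCalculusOfFractions] (h : TwoOutOfThree W)
    {X Y₁ Y₂ : C} {t₁ : Y₁ ⟶ X} {t₂ : Y₂ ⟶ X} (ht₁ : W t₁) (ht₂ : W t₂) :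
    ∃ (Y : C) (q₁ : Y ⟶ Y₁) (q₂ : Y ⟶ Y₂), W q₁ ∧ W q₂ ∧ q₁ ≫ t₁ = q₂ ≫ t₂ := by
  obtain ⟨ψ, hψ⟩ := (LeftFraction.mk t₂ t₁ ht₁).exists_rightFraction
  exact ⟨ψ.X', ψ.f, ψ.s, h.2.2 ψ.f t₁ ht₁ (hψ ▸ W.comp_mem _ _ ψ.hs ht₂), ψ.hs, hψ.symm⟩

end TwoOutOfThree

abbrev ETilde (S : MorphismProperty D) (T : AddBifunctor D) (Cc A : D) : Type _ :=
  Quot (TripletRel S T Cc A)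

namespace Triplet

variable {S : MorphismProperty D} {T : AddBifunctor D} {Cc Cc' A A' : D}

def IsExpansion (R Tr : Triplet S T Cc A) : Prop :=
  ∃ (u : Tr.X ⟶ R.X) (v : R.Z ⟶ Tr.Z), S u ∧ S v ∧ R.s = Tr.s ≫ u ∧ R.t = v ≫ Tr.t ∧
    R.δ = T.pull v (T.push u Tr.δ)

theorem isExpansion_refl [S.ContainsIdentities] (Tr : Triplet S T Cc A) : Tr.IsExpansion Tr :=
  ⟨𝟙 _, 𝟙 _, S.id_mem _, S.id_mem _, (Category.comp_id _).symm, (Category.id_comp _).symm,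
    by rw [T.push_id, T.pull_id]⟩

theorem isExpansion_push [S.ContainsIdentities] (Tr : Triplet S T Cc A) {X : D} (u : Tr.X ⟶ X)
    (hu : S u) {s : A ⟶ X} (hs : S s) {δ : T.E Tr.Z X} (hsu : s = Tr.s ≫ u)
    (hδ : δ = T.push u Tr.δ) : IsExpansion ⟨Tr.Z, X, Tr.t, s, Tr.ht, hs, δ⟩ Tr :=
  ⟨u, 𝟙 _, hu, S.id_mem _, hsu, (Category.id_comp _).symm, by rw [hδ, T.pull_id]⟩

theorem isExpansion_pull [S.ContainsIdentities] (Tr : Triplet S T Cc A) {Z : D} (v : Z ⟶ Tr.Z)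
    (hv : S v) {t : Z ⟶ Cc} (ht : S t) {δ : T.E Z Tr.X} (htv : t = v ≫ Tr.t)
    (hδ : δ = T.pull v Tr.δ) : IsExpansion ⟨Z, Tr.X, t, Tr.s, ht, Tr.hs, δ⟩ Tr :=
  ⟨𝟙 _, v, S.id_mem _, hv, (Category.comp_id _).symm, htv, by rw [hδ, T.push_id]⟩

theorem IsExpansion.trans [S.IsStableUnderComposition] {R' R Tr : Triplet S T Cc A}
    (h' : R'.IsExpansion R) (h : R.IsExpansion Tr) : R'.IsExpansion Tr := by
  obtain ⟨u', v', hu', hv', hs', ht', hδ'⟩ := h'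
  obtain ⟨u, v, hu, hv, hs, ht, hδ⟩ := h
  exact ⟨u ≫ u', v' ≫ v, S.comp_mem _ _ hu hu', S.comp_mem _ _ hv' hv,
    by rw [hs', hs, Category.assoc], by rw [ht', ht, Category.assoc],
    by rw [hδ', hδ, T.pull_push_comp]⟩

theorem IsExpansion.exists_common [S.HasLeftCalculusOfFractions] [S.HasRightCalculusOfFractions]
    (h23 : TwoOutOfThree S) {R R' Tr : Triplet S T Cc A} (h : R.IsExpansion Tr)
    (h' : R'.IsExpansion Tr) :
    ∃ R'' : Triplet S T Cc A, R''.IsExpansion R ∧ R''.IsExpansion R' := by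
  obtain ⟨u, v, hu, hv, hs, ht, hδ⟩ := h
  obtain ⟨u', v', hu', hv', hs', ht', hδ'⟩ := h'
  obtain ⟨X, p, p', hp, hp', hpp⟩ := h23.exists_comp_eq_comp_of_span hu hu'
  obtain ⟨Z, q, q', hq, hq', hqq⟩ := h23.exists_comp_eq_comp_of_cospan hv hv'
  refine ⟨⟨Z, X, q ≫ R.t, R.s ≫ p, S.comp_mem _ _ hq R.ht, S.comp_mem _ _ R.hs hp,
    T.pull q (T.push p R.δ)⟩, ⟨p, q, hp, hq, rfl, rfl, rfl⟩, ⟨p', q', hp', hq', ?_, ?_, ?_⟩⟩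
  · dsimp only
    rw [hs, hs', Category.assoc, Category.assoc, hpp]
  · dsimp only
    rw [ht, ht', ← Category.assoc, ← Category.assoc, hqq]
  · rw [hδ, hδ', ← T.pull_push_comp, ← T.pull_push_comp, hpp, hqq]

theorem tripletRel_iff {T₁ T₂ : Triplet S T Cc A} :
    TripletRel S T Cc A T₁ T₂ ↔ ∃ R : Triplet S T Cc A, R.IsExpansion T₁ ∧ R.IsExpansion T₂ := by
  constructor
  · rintro ⟨Z, X, t, s, u₁, v₁, u₂, v₂, ht, hs, hu₁, hv₁, hu₂, hv₂, hs₁, hs₂, ht₁, ht₂, hδ⟩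
    exact ⟨⟨Z, X, t, s, ht, hs, T.pull v₁ (T.push u₁ T₁.δ)⟩,
      ⟨u₁, v₁, hu₁, hv₁, hs₁, ht₁, rfl⟩, ⟨u₂, v₂, hu₂, hv₂, hs₂, ht₂, hδ⟩⟩
  · rintro ⟨R, ⟨u₁, v₁, hu₁, hv₁, hs₁, ht₁, hδ₁⟩, ⟨u₂, v₂, hu₂, hv₂, hs₂, ht₂, hδ₂⟩⟩
    exact ⟨R.Z, R.X, R.t, R.s, u₁, v₁, u₂, v₂, R.ht, R.hs, hu₁, hv₁, hu₂, hv₂,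
      hs₁, hs₂, ht₁, ht₂, hδ₁.symm.trans hδ₂⟩

theorem IsExpansion.mk_eq [S.ContainsIdentities] {R Tr : Triplet S T Cc A}
    (h : R.IsExpansion Tr) : (Quot.mk _ R : ETilde S T Cc A) = Quot.mk _ Tr :=
  Quot.sound (tripletRel_iff.mpr ⟨R, isExpansion_refl R, h⟩)

theorem tripletRel_equivalence [S.HasLeftCalculusOfFractions] [S.HasRightCalculusOfFractions]
    (h23 : TwoOutOfThree S) : Equivalence (TripletRel S T Cc A) where
  refl Tr := tripletRel_iff.mpr ⟨Tr, isExpansion_refl Tr, isExpansion_refl Tr⟩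
  symm h := by
    obtain ⟨R, h₁, h₂⟩ := tripletRel_iff.mp h
    exact tripletRel_iff.mpr ⟨R, h₂, h₁⟩
  trans h₁₂ h₂₃ := by
    obtain ⟨R, h₁, h₂⟩ := tripletRel_iff.mp h₁₂
    obtain ⟨R', h₂', h₃⟩ := tripletRel_iff.mp h₂₃
    obtain ⟨R'', hR, hR'⟩ := h₂.exists_common h23 h₂'
    exact tripletRel_iff.mpr ⟨R'', hR.trans h₁, hR'.trans h₃⟩

theorem mk_eq_mk_iff [S.HasLeftCalculusOfFractions] [S.HasRightCalculusOfFractions]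
    (h23 : TwoOutOfThree S) {T₁ T₂ : Triplet S T Cc A} :
    (Quot.mk _ T₁ : ETilde S T Cc A) = Quot.mk _ T₂ ↔
      ∃ R : Triplet S T Cc A, R.IsExpansion T₁ ∧ R.IsExpansion T₂ :=
  Quot.eq.trans ((tripletRel_equivalence h23).eqvGen_iff.trans tripletRel_iff)

theorem mk_with_δ_injective [S.HasLeftCalculusOfFractions] [S.HasRightCalculusOfFractions]
    (h23 : TwoOutOfThree S) (hT : T.TorsionFree S) (R : Triplet S T Cc A) :
    Function.Injective fun ρ : T.E R.Z R.X => (Quot.mk _ { R with δ := ρ } : ETilde S T Cc A) := by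
  intro ρ ρ' h
  obtain ⟨R', ⟨u, v, hu, hv, hs, ht, hδ⟩, ⟨u', v', -, -, hs', ht', hδ'⟩⟩ :=
    (mk_eq_mk_iff h23).mp h
  obtain ⟨_, r, hr, hur⟩ := HasLeftCalculusOfFractions.ext u u' R.s R.hs (hs.symm.trans hs')
  obtain ⟨_, q, hq, hqv⟩ := HasRightCalculusOfFractions.ext v v' R.t R.ht (ht.symm.trans ht')
  refine hT.eq_of_pull_push_eq (S.comp_mem _ _ hu hr) (S.comp_mem _ _ hq hv) ?_
  rw [T.pull_push_comp, ← hδ, hδ', ← T.pull_push_comp, ← hur, ← hqv]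

theorem mk_add_congr [S.HasLeftCalculusOfFractions] [S.HasRightCalculusOfFractions]
    (h23 : TwoOutOfThree S) (hT : T.TorsionFree S) {R₁ R₂ : Triplet S T Cc A}
    {ρ₁ : T.E R₁.Z R₁.X} {ρ₂ : T.E R₂.Z R₂.X}
    (h : (Quot.mk _ R₁ : ETilde S T Cc A) = Quot.mk _ R₂)
    (hρ : (Quot.mk _ { R₁ with δ := ρ₁ } : ETilde S T Cc A) = Quot.mk _ { R₂ with δ := ρ₂ }) :
    (Quot.mk _ { R₁ with δ := R₁.δ + ρ₁ } : ETilde S T Cc A) =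
      Quot.mk _ { R₂ with δ := R₂.δ + ρ₂ } := by
  obtain ⟨R, ⟨u₁, v₁, hu₁, hv₁, hs₁, ht₁, hδ₁⟩, ⟨u₂, v₂, hu₂, hv₂, hs₂, ht₂, hδ₂⟩⟩ :=
    (mk_eq_mk_iff h23).mp h
  have e₁ (ρ : T.E R₁.Z R₁.X) :
      IsExpansion { R with δ := T.pull v₁ (T.push u₁ ρ) } { R₁ with δ := ρ } :=
    ⟨u₁, v₁, hu₁, hv₁, hs₁, ht₁, rfl⟩
  have e₂ (ρ : T.E R₂.Z R₂.X) :
      IsExpansion { R with δ := T.pull v₂ (T.push u₂ ρ) } { R₂ with δ := ρ } :=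
    ⟨u₂, v₂, hu₂, hv₂, hs₂, ht₂, rfl⟩
  have hρ' : T.pull v₁ (T.push u₁ ρ₁) = T.pull v₂ (T.push u₂ ρ₂) :=
    mk_with_δ_injective h23 hT R ((e₁ ρ₁).mk_eq.trans (hρ.trans (e₂ ρ₂).mk_eq.symm))
  rw [← (e₁ _).mk_eq, ← (e₂ _).mk_eq, T.push_add, T.pull_add, T.push_add, T.pull_add, ← hδ₁,
    ← hδ₂, hρ']

section Push

variable [S.HasLeftCalculusOfFractions]

theorem mk_push_eq_mk_push (h23 : TwoOutOfThree S) (a : A ⟶ A') (Tr : Triplet S T Cc A)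
    {X₁ X₂ : D} {f₁ : Tr.X ⟶ X₁} {s₁ : A' ⟶ X₁} (hs₁ : S s₁) (w₁ : a ≫ s₁ = Tr.s ≫ f₁)
    {f₂ : Tr.X ⟶ X₂} {s₂ : A' ⟶ X₂} (hs₂ : S s₂) (w₂ : a ≫ s₂ = Tr.s ≫ f₂) :
    (Quot.mk _ ⟨Tr.Z, X₁, Tr.t, s₁, Tr.ht, hs₁, T.push f₁ Tr.δ⟩ : ETilde S T Cc A') =
      Quot.mk _ ⟨Tr.Z, X₂, Tr.t, s₂, Tr.ht, hs₂, T.push f₂ Tr.δ⟩ := by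
  obtain ⟨X, p₁, p₂, hp₁, hp₂, hp⟩ := h23.exists_comp_eq_comp_of_span hs₁ hs₂
  obtain ⟨_, r, hr, hfr⟩ := HasLeftCalculusOfFractions.ext (f₁ ≫ p₁) (f₂ ≫ p₂) Tr.s Tr.hs
    (by rw [← reassoc_of% w₁, ← reassoc_of% w₂, hp])
  simp only [Category.assoc] at hfr
  have hs : S (s₁ ≫ p₁ ≫ r) := S.comp_mem _ _ hs₁ (S.comp_mem _ _ hp₁ hr)
  have e₁ := isExpansion_push ⟨Tr.Z, X₁, Tr.t, s₁, Tr.ht, hs₁, T.push f₁ Tr.δ⟩ (p₁ ≫ r)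
    (S.comp_mem _ _ hp₁ hr) hs (δ := T.push (f₁ ≫ p₁ ≫ r) Tr.δ) rfl (T.push_comp _ _ _)
  have e₂ := isExpansion_push ⟨Tr.Z, X₂, Tr.t, s₂, Tr.ht, hs₂, T.push f₂ Tr.δ⟩ (p₂ ≫ r)
    (S.comp_mem _ _ hp₂ hr) hs (δ := T.push (f₁ ≫ p₁ ≫ r) Tr.δ) (by rw [reassoc_of% hp])
    (by rw [hfr, T.push_comp])
  exact e₁.mk_eq.symm.trans e₂.mk_eq

noncomputable def pushforward (a : A ⟶ A') (Tr : Triplet S T Cc A) : Triplet S T Cc A' :=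
  let ψ := (RightFraction.mk Tr.s Tr.hs a).leftFraction
  ⟨Tr.Z, ψ.Y', Tr.t, ψ.s, Tr.ht, ψ.hs, T.push ψ.f Tr.δ⟩

theorem mk_pushforward (h23 : TwoOutOfThree S) (a : A ⟶ A') (Tr : Triplet S T Cc A) {X' : D}
    {f : Tr.X ⟶ X'} {s' : A' ⟶ X'} (hs' : S s') (w : a ≫ s' = Tr.s ≫ f) :
    (Quot.mk _ (Tr.pushforward a) : ETilde S T Cc A') =
      Quot.mk _ ⟨Tr.Z, X', Tr.t, s', Tr.ht, hs', T.push f Tr.δ⟩ :=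
  mk_push_eq_mk_push h23 a Tr _ (RightFraction.mk Tr.s Tr.hs a).leftFraction_fac hs' w

theorem IsExpansion.mk_pushforward (h23 : TwoOutOfThree S) (a : A ⟶ A')
    {R Tr : Triplet S T Cc A} (h : R.IsExpansion Tr) :
    (Quot.mk _ (R.pushforward a) : ETilde S T Cc A') = Quot.mk _ (Tr.pushforward a) := by
  obtain ⟨u, v, hu, hv, hs, ht, hδ⟩ := h
  obtain ⟨ψ, hψ⟩ := (RightFraction.mk Tr.s Tr.hs a).exists_leftFraction
  obtain ⟨φ, hφ⟩ := (RightFraction.mk u hu ψ.f).exists_leftFraction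
  dsimp only at hψ hφ
  rw [Triplet.mk_pushforward h23 a Tr ψ.hs hψ, Triplet.mk_pushforward h23 a R
    (S.comp_mem _ _ ψ.hs φ.hs) (by rw [reassoc_of% hψ, hφ, hs, Category.assoc])]
  exact IsExpansion.mk_eq ⟨φ.s, v, φ.hs, hv, rfl, ht,
    by rw [hδ, ← T.pull_push, ← T.push_comp, ← T.push_comp, hφ]⟩

end Push

section Pull

variable [S.HasRightCalculusOfFractions]

theorem mk_pull_eq_mk_pull (h23 : TwoOutOfThree S) (c : Cc' ⟶ Cc) (Tr : Triplet S T Cc A)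
    {Z₁ Z₂ : D} {g₁ : Z₁ ⟶ Tr.Z} {t₁ : Z₁ ⟶ Cc'} (ht₁ : S t₁) (w₁ : t₁ ≫ c = g₁ ≫ Tr.t)
    {g₂ : Z₂ ⟶ Tr.Z} {t₂ : Z₂ ⟶ Cc'} (ht₂ : S t₂) (w₂ : t₂ ≫ c = g₂ ≫ Tr.t) :
    (Quot.mk _ ⟨Z₁, Tr.X, t₁, Tr.s, ht₁, Tr.hs, T.pull g₁ Tr.δ⟩ : ETilde S T Cc' A) =
      Quot.mk _ ⟨Z₂, Tr.X, t₂, Tr.s, ht₂, Tr.hs, T.pull g₂ Tr.δ⟩ := by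
  obtain ⟨Z, q₁, q₂, hq₁, hq₂, hq⟩ := h23.exists_comp_eq_comp_of_cospan ht₁ ht₂
  obtain ⟨_, r, hr, hrg⟩ := HasRightCalculusOfFractions.ext (q₁ ≫ g₁) (q₂ ≫ g₂) Tr.t Tr.ht
    (by simp only [Category.assoc, ← w₁, ← w₂]; simp only [← Category.assoc, hq])
  simp only [← Category.assoc] at hrg
  have ht : S ((r ≫ q₁) ≫ t₁) := S.comp_mem _ _ (S.comp_mem _ _ hr hq₁) ht₁
  have e₁ := isExpansion_pull ⟨Z₁, Tr.X, t₁, Tr.s, ht₁, Tr.hs, T.pull g₁ Tr.δ⟩ (r ≫ q₁)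
    (S.comp_mem _ _ hr hq₁) ht (δ := T.pull ((r ≫ q₁) ≫ g₁) Tr.δ) rfl (T.pull_comp _ _ _)
  have e₂ := isExpansion_pull ⟨Z₂, Tr.X, t₂, Tr.s, ht₂, Tr.hs, T.pull g₂ Tr.δ⟩ (r ≫ q₂)
    (S.comp_mem _ _ hr hq₂) ht (δ := T.pull ((r ≫ q₁) ≫ g₁) Tr.δ)
    (by simp only [Category.assoc, hq]) (by rw [hrg, T.pull_comp])
  exact e₁.mk_eq.symm.trans e₂.mk_eq

noncomputable def pullback (c : Cc' ⟶ Cc) (Tr : Triplet S T Cc A) : Triplet S T Cc' A :=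
  let ψ := (LeftFraction.mk c Tr.t Tr.ht).rightFraction
  ⟨ψ.X', Tr.X, ψ.s, Tr.s, ψ.hs, Tr.hs, T.pull ψ.f Tr.δ⟩

theorem mk_pullback (h23 : TwoOutOfThree S) (c : Cc' ⟶ Cc) (Tr : Triplet S T Cc A) {Z' : D}
    {g : Z' ⟶ Tr.Z} {t' : Z' ⟶ Cc'} (ht' : S t') (w : t' ≫ c = g ≫ Tr.t) :
    (Quot.mk _ (Tr.pullback c) : ETilde S T Cc' A) =
      Quot.mk _ ⟨Z', Tr.X, t', Tr.s, ht', Tr.hs, T.pull g Tr.δ⟩ :=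
  mk_pull_eq_mk_pull h23 c Tr _ (LeftFraction.mk c Tr.t Tr.ht).rightFraction_fac ht' w

theorem IsExpansion.mk_pullback (h23 : TwoOutOfThree S) (c : Cc' ⟶ Cc)
    {R Tr : Triplet S T Cc A} (h : R.IsExpansion Tr) :
    (Quot.mk _ (R.pullback c) : ETilde S T Cc' A) = Quot.mk _ (Tr.pullback c) := by
  obtain ⟨u, v, hu, hv, hs, ht, hδ⟩ := h
  obtain ⟨ψ, hψ⟩ := (LeftFraction.mk c Tr.t Tr.ht).exists_rightFraction
  obtain ⟨φ, hφ⟩ := (LeftFraction.mk ψ.f v hv).exists_rightFraction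
  dsimp only at hψ hφ
  rw [Triplet.mk_pullback h23 c Tr ψ.hs hψ, Triplet.mk_pullback h23 c R
    (S.comp_mem _ _ φ.hs ψ.hs) (by rw [Category.assoc, hψ, reassoc_of% hφ, ht])]
  exact IsExpansion.mk_eq ⟨u, φ.s, hu, φ.hs, hs, rfl,
    by rw [hδ, ← T.pull_push, ← T.pull_comp, ← T.pull_comp, hφ]⟩

end Pull

end Triplet

namespace ETilde

variable {S : MorphismProperty D} {T : AddBifunctor D} {Cc Cc' Cc'' A A' A'' : D}

def lift {α : Sort*} (Φ : Triplet S T Cc A → α)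
    (hΦ : ∀ R Tr : Triplet S T Cc A, R.IsExpansion Tr → Φ R = Φ Tr) : ETilde S T Cc A → α :=
  Quot.lift Φ fun _ _ h => by
    obtain ⟨R, h₁, h₂⟩ := Triplet.tripletRel_iff.mp h
    exact (hΦ _ _ h₁).symm.trans (hΦ _ _ h₂)

@[simp]
theorem lift_mk {α : Sort*} (Φ : Triplet S T Cc A → α)
    (hΦ : ∀ R Tr : Triplet S T Cc A, R.IsExpansion Tr → Φ R = Φ Tr) (Tr : Triplet S T Cc A) :
    lift Φ hΦ (Quot.mk _ Tr) = Φ Tr :=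
  rfl

-- Given 2-out-of-3 and the Ore conditions, any two classes have representatives over a common
open Classical in
noncomputable def add (x y : ETilde S T Cc A) : ETilde S T Cc A :=
  if h : ∃ (R : Triplet S T Cc A) (ρ : T.E R.Z R.X),
      x = Quot.mk _ R ∧ y = Quot.mk _ { R with δ := ρ } then
    Quot.mk _ { h.choose with δ := h.choose.δ + h.choose_spec.choose }
  else x

theorem add_mk [S.HasLeftCalculusOfFractions] [S.HasRightCalculusOfFractions]
    (h23 : TwoOutOfThree S) (hT : T.TorsionFree S) (R : Triplet S T Cc A) (ρ : T.E R.Z R.X) :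
    add (Quot.mk _ R) (Quot.mk _ { R with δ := ρ }) = Quot.mk _ { R with δ := R.δ + ρ } := by
  have h : ∃ (R' : Triplet S T Cc A) (ρ' : T.E R'.Z R'.X), (Quot.mk _ R : ETilde S T Cc A) =
      Quot.mk _ R' ∧ (Quot.mk _ { R with δ := ρ } : ETilde S T Cc A) =
        Quot.mk _ { R' with δ := ρ' } := ⟨R, ρ, rfl, rfl⟩
  rw [add, dif_pos h]
  obtain ⟨h₁, h₂⟩ := h.choose_spec.choose_spec
  exact (Triplet.mk_add_congr h23 hT h₁ h₂).symm

section Push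

variable [S.HasLeftCalculusOfFractions]

noncomputable def push (h23 : TwoOutOfThree S) (Cc : D) {A A' : D} (a : A ⟶ A') :
    ETilde S T Cc A → ETilde S T Cc A' :=
  lift (fun Tr => Quot.mk _ (Tr.pushforward a)) fun _ _ h => h.mk_pushforward h23 a

theorem push_mk (h23 : TwoOutOfThree S) (a : A ⟶ A') (Tr : Triplet S T Cc A) {X' : D}
    {f : Tr.X ⟶ X'} {s' : A' ⟶ X'} (hs' : S s') (w : a ≫ s' = Tr.s ≫ f) :
    push h23 Cc a (Quot.mk _ Tr) = Quot.mk _ ⟨Tr.Z, X', Tr.t, s', Tr.ht, hs', T.push f Tr.δ⟩ :=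
  Tr.mk_pushforward h23 a hs' w

theorem push_id (h23 : TwoOutOfThree S) (x : ETilde S T Cc A) : push h23 Cc (𝟙 A) x = x := by
  obtain ⟨Tr⟩ := x
  rw [push_mk h23 (𝟙 A) Tr Tr.hs (f := 𝟙 _) (by simp), T.push_id]

theorem push_comp (h23 : TwoOutOfThree S) (a : A ⟶ A') (b : A' ⟶ A'') (x : ETilde S T Cc A) :
    push h23 Cc (a ≫ b) x = push h23 Cc b (push h23 Cc a x) := by
  obtain ⟨Tr⟩ := x
  obtain ⟨ψ, hψ⟩ := (RightFraction.mk Tr.s Tr.hs a).exists_leftFraction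
  obtain ⟨φ, hφ⟩ := (RightFraction.mk ψ.s ψ.hs b).exists_leftFraction
  dsimp only at hψ hφ
  rw [push_mk h23 a Tr ψ.hs hψ, push_mk h23 b ⟨Tr.Z, _, Tr.t, ψ.s, Tr.ht, ψ.hs, _⟩ φ.hs hφ,
    push_mk h23 (a ≫ b) Tr φ.hs (by rw [Category.assoc, hφ, reassoc_of% hψ]), T.push_comp]

theorem push_bijective (h23 : TwoOutOfThree S) {u : A ⟶ A'} (hu : S u) :
    Function.Bijective (push (T := T) h23 Cc u) := by
  refine Function.bijective_iff_has_inverse.mpr ⟨lift (fun Tr => Quot.mk _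
    ⟨Tr.Z, Tr.X, Tr.t, u ≫ Tr.s, Tr.ht, S.comp_mem _ _ hu Tr.hs, Tr.δ⟩) ?_, ?_, ?_⟩
  · rintro R Tr ⟨u', v, hu', hv, hs, ht, hδ⟩
    exact Triplet.IsExpansion.mk_eq ⟨u', v, hu', hv, by dsimp only; rw [hs, Category.assoc], ht, hδ⟩
  · rintro ⟨Tr⟩
    obtain ⟨ψ, hψ⟩ := (RightFraction.mk Tr.s Tr.hs u).exists_leftFraction
    dsimp only at hψ
    rw [push_mk h23 u Tr ψ.hs hψ, lift_mk]
    exact (Tr.isExpansion_push ψ.f (h23.2.1 _ _ Tr.hs (hψ ▸ S.comp_mem _ _ hu ψ.hs)) _ hψ rfl).mk_eq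
  · rintro ⟨Tr⟩
    rw [lift_mk, push_mk h23 u _ Tr.hs (f := 𝟙 _) (Category.comp_id _).symm, T.push_id]

theorem push_muMap (h23 : TwoOutOfThree S) (a : A ⟶ A') (δ : T.E Cc A) :
    push h23 Cc a (muMap S T Cc A δ) = muMap S T Cc A' (T.push a δ) :=
  push_mk h23 a _ (S.id_mem A') (by simp)

end Push

section Pull

variable [S.HasRightCalculusOfFractions]

noncomputable def pull (h23 : TwoOutOfThree S) {Cc' Cc : D} (c : Cc' ⟶ Cc) (A : D) :
    ETilde S T Cc A → ETilde S T Cc' A :=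
  lift (fun Tr => Quot.mk _ (Tr.pullback c)) fun _ _ h => h.mk_pullback h23 c

theorem pull_mk (h23 : TwoOutOfThree S) (c : Cc' ⟶ Cc) (Tr : Triplet S T Cc A) {Z' : D}
    {g : Z' ⟶ Tr.Z} {t' : Z' ⟶ Cc'} (ht' : S t') (w : t' ≫ c = g ≫ Tr.t) :
    pull h23 c A (Quot.mk _ Tr) = Quot.mk _ ⟨Z', Tr.X, t', Tr.s, ht', Tr.hs, T.pull g Tr.δ⟩ :=
  Tr.mk_pullback h23 c ht' w

theorem pull_id (h23 : TwoOutOfThree S) (x : ETilde S T Cc A) : pull h23 (𝟙 Cc) A x = x := by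
  obtain ⟨Tr⟩ := x
  rw [pull_mk h23 (𝟙 Cc) Tr Tr.ht (g := 𝟙 _) (by simp), T.pull_id]

theorem pull_comp (h23 : TwoOutOfThree S) (d : Cc'' ⟶ Cc') (c : Cc' ⟶ Cc)
    (x : ETilde S T Cc A) : pull h23 (d ≫ c) A x = pull h23 d A (pull h23 c A x) := by
  obtain ⟨Tr⟩ := x
  obtain ⟨ψ, hψ⟩ := (LeftFraction.mk c Tr.t Tr.ht).exists_rightFraction
  obtain ⟨φ, hφ⟩ := (LeftFraction.mk d ψ.s ψ.hs).exists_rightFraction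
  dsimp only at hψ hφ
  rw [pull_mk h23 c Tr ψ.hs hψ, pull_mk h23 d ⟨_, Tr.X, ψ.s, Tr.s, ψ.hs, Tr.hs, _⟩ φ.hs hφ,
    pull_mk h23 (d ≫ c) Tr φ.hs (by rw [reassoc_of% hφ, hψ, Category.assoc]), T.pull_comp]

theorem pull_bijective (h23 : TwoOutOfThree S) {v : Cc' ⟶ Cc} (hv : S v) :
    Function.Bijective (pull (T := T) h23 v A) := by
  refine Function.bijective_iff_has_inverse.mpr ⟨lift (fun Tr => Quot.mk _
    ⟨Tr.Z, Tr.X, Tr.t ≫ v, Tr.s, S.comp_mem _ _ Tr.ht hv, Tr.hs, Tr.δ⟩) ?_, ?_, ?_⟩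
  · rintro R Tr ⟨u, v', hu, hv', hs, ht, hδ⟩
    exact Triplet.IsExpansion.mk_eq ⟨u, v', hu, hv', hs, by dsimp only; rw [ht, Category.assoc], hδ⟩
  · rintro ⟨Tr⟩
    obtain ⟨ψ, hψ⟩ := (LeftFraction.mk v Tr.t Tr.ht).exists_rightFraction
    dsimp only at hψ
    rw [pull_mk h23 v Tr ψ.hs hψ, lift_mk]
    exact (Tr.isExpansion_pull ψ.f (h23.2.2 _ _ Tr.ht (hψ ▸ S.comp_mem _ _ ψ.hs hv)) _ hψ rfl).mk_eq
  · rintro ⟨Tr⟩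
    rw [lift_mk, pull_mk h23 v _ Tr.ht (g := 𝟙 _) (Category.id_comp _).symm, T.pull_id]

theorem pull_muMap [S.HasLeftCalculusOfFractions] (h23 : TwoOutOfThree S) (c : Cc' ⟶ Cc)
    (δ : T.E Cc A) : pull h23 c A (muMap S T Cc A δ) = muMap S T Cc' A (T.pull c δ) :=
  pull_mk h23 c _ (S.id_mem Cc') (by simp)

end Pull

theorem pull_push [S.HasLeftCalculusOfFractions] [S.HasRightCalculusOfFractions]
    (h23 : TwoOutOfThree S) (c : Cc' ⟶ Cc) (a : A ⟶ A') (x : ETilde S T Cc A) :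
    pull h23 c A' (push h23 Cc a x) = push h23 Cc' a (pull h23 c A x) := by
  obtain ⟨Tr⟩ := x
  obtain ⟨ψ, hψ⟩ := (RightFraction.mk Tr.s Tr.hs a).exists_leftFraction
  obtain ⟨φ, hφ⟩ := (LeftFraction.mk c Tr.t Tr.ht).exists_rightFraction
  dsimp only at hψ hφ
  rw [push_mk h23 a Tr ψ.hs hψ, pull_mk h23 c Tr φ.hs hφ,
    pull_mk h23 c ⟨Tr.Z, _, Tr.t, ψ.s, Tr.ht, ψ.hs, _⟩ φ.hs hφ,
    push_mk h23 a ⟨_, Tr.X, φ.s, Tr.s, φ.hs, Tr.hs, _⟩ ψ.hs hψ, T.pull_push]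

end ETilde

theorem muMap_injective {S : MorphismProperty D} {T : AddBifunctor D}
    [S.HasLeftCalculusOfFractions] [S.HasRightCalculusOfFractions] (h23 : TwoOutOfThree S)
    (hT : T.TorsionFree S) (Cc A : D) : Function.Injective (muMap S T Cc A) := fun δ _ h =>
  Triplet.mk_with_δ_injective h23 hT ⟨Cc, A, 𝟙 Cc, 𝟙 A, S.id_mem Cc, S.id_mem A, δ⟩ h

/-- The assignment `δ ↦ [id \ δ / id]` defines an injective additive map
`μ_{C,A} : E(C, A) → Ẽ(C, A)`, natural in both variables: `Ẽ` carries
pushforward and pullback operations (functorial, inverting `S`, hence defined on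
the localization `D[S⁻¹]`) compatible with those of `E` via `μ`, so that `μ`
is a natural transformation `E ⇒ Ẽ ∘ (Qᵒᵖ × Q)`. -/
theorem mu_injective_natural (S : MorphismProperty D)
    [S.HasLeftCalculusOfFractions] [S.HasRightCalculusOfFractions]
    (h23 : TwoOutOfThree S) (T : AddBifunctor D)
    (hsat : ∀ {Z' Z X X' : D} (u : X ⟶ X') (v : Z' ⟶ Z) (δ : T.E Z X),
      S u → S v → T.pull v (T.push u δ) = 0 → δ = 0) :
    (∀ Cc A : D, Function.Injective (muMap S T Cc A)) ∧
    (∀ (Cc A : D) (δ δ' : T.E Cc A),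
      ∃ add : Quot (TripletRel S T Cc A) → Quot (TripletRel S T Cc A) →
          Quot (TripletRel S T Cc A),
        (∀ (Z X : D) (t : Z ⟶ Cc) (s : A ⟶ X) (ht : S t) (hs : S s)
            (ρ₁ ρ₂ : T.E Z X),
          add (Quot.mk _ ⟨Z, X, t, s, ht, hs, ρ₁⟩)
              (Quot.mk _ ⟨Z, X, t, s, ht, hs, ρ₂⟩)
            = Quot.mk _ ⟨Z, X, t, s, ht, hs, ρ₁ + ρ₂⟩) ∧
        muMap S T Cc A (δ + δ') = add (muMap S T Cc A δ) (muMap S T Cc A δ')) ∧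
    ∃ (tpush : ∀ (Cc : D) {A A' : D}, (A ⟶ A') →
        Quot (TripletRel S T Cc A) → Quot (TripletRel S T Cc A'))
      (tpull : ∀ {Cc' Cc : D}, (Cc' ⟶ Cc) → ∀ (A : D),
        Quot (TripletRel S T Cc A) → Quot (TripletRel S T Cc' A)),
      (∀ (Cc A : D) (x : Quot (TripletRel S T Cc A)), tpush Cc (𝟙 A) x = x) ∧
      (∀ (Cc : D) {A A' A'' : D} (a : A ⟶ A') (b : A' ⟶ A'')
          (x : Quot (TripletRel S T Cc A)),
        tpush Cc (a ≫ b) x = tpush Cc b (tpush Cc a x)) ∧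
      (∀ (Cc A : D) (x : Quot (TripletRel S T Cc A)), tpull (𝟙 Cc) A x = x) ∧
      (∀ {Cc'' Cc' Cc : D} (d : Cc'' ⟶ Cc') (c : Cc' ⟶ Cc) (A : D)
          (x : Quot (TripletRel S T Cc A)),
        tpull (d ≫ c) A x = tpull d A (tpull c A x)) ∧
      (∀ (Cc : D) {A A' : D} (u : A ⟶ A'), S u → Function.Bijective (tpush Cc u)) ∧
      (∀ {Cc' Cc : D} (v : Cc' ⟶ Cc), S v → ∀ A : D,
        Function.Bijective (fun x => tpull v A x)) ∧
      (∀ {Cc' Cc A A' : D} (c : Cc' ⟶ Cc) (a : A ⟶ A')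
          (x : Quot (TripletRel S T Cc A)),
        tpull c A' (tpush Cc a x) = tpush Cc' a (tpull c A x)) ∧
      (∀ (Cc : D) {A A' : D} (a : A ⟶ A') (δ : T.E Cc A),
        tpush Cc a (muMap S T Cc A δ) = muMap S T Cc A' (T.push a δ)) ∧
      (∀ {Cc' Cc : D} (c : Cc' ⟶ Cc) (A : D) (δ : T.E Cc A),
        tpull c A (muMap S T Cc A δ) = muMap S T Cc' A (T.pull c δ)) := by
  refine ⟨muMap_injective h23 hsat, fun Cc A δ δ' => ⟨ETilde.add,
    fun Z X t s ht hs ρ₁ ρ₂ => ETilde.add_mk h23 hsat ⟨Z, X, t, s, ht, hs, ρ₁⟩ ρ₂,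
    (ETilde.add_mk h23 hsat ⟨Cc, A, 𝟙 Cc, 𝟙 A, S.id_mem Cc, S.id_mem A, δ⟩ δ').symm⟩, ?_⟩
  exact ⟨ETilde.push h23, ETilde.pull h23, fun _ _ => ETilde.push_id h23,
    fun _ _ _ _ => ETilde.push_comp h23, fun _ _ => ETilde.pull_id h23,
    fun d c _ => ETilde.pull_comp h23 d c, fun _ _ _ _ => ETilde.push_bijective h23,
    fun _ hv _ => ETilde.pull_bijective h23 hv, ETilde.pull_push h23,
    fun _ _ _ => ETilde.push_muMap h23, fun c _ => ETilde.pull_muMap h23 c⟩
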